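/- arXiv:1004.4221 — 4 statements merged into one kernel-verified Lean document; each statement's English description precedes it below -/
import Mathlib

section
/- Let p ≥ 1, let X be a Banach space, let n ∈ ℕ, let m be a positive integer divisible by 4, let ν be a probability measure on ℤ_m^n, and let f : ℤ_m^n → X. Then for every ε ∈ {−1,1}^n, ∫_{ℤ_m^n} ‖f(x + (m/2)ε) − f(x)‖_X^p dμ(x) ≤ 2·3^{p−1} ∫_{ℤ_m^n} ‖f*ν(x) − f(x)‖_X^p dμ(x) + 3^{p−1} (m/4)^p ∫_{ℤ_m^n} ‖f*ν(x + ε) − f*ν(x − ε)‖_X^p dμ(x). -/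
open Finset

/-- The element of `ℤ_m^n` corresponding to a sign vector `ε ∈ {-1,1}^n`,
via the natural map `ℤ → ℤ/mℤ` applied coordinatewise. -/
def signVec (m n : ℕ) (ε : Fin n → Bool) : Fin n → ZMod m :=
  fun i => if ε i then 1 else -1

/-- Convolution of `f : ℤ_m^n → X` with a probability measure `ν` on `ℤ_m^n`
(given by its weights): `f*ν(x) = ∑_y ν(y) • f(x - y)`. -/
noncomputable def conv {m n : ℕ} [NeZero m] {X : Type*} [NormedAddCommGroup X]
    [NormedSpace ℝ X] (ν : (Fin n → ZMod m) → ℝ) (f : (Fin n → ZMod m) → X)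
    (x : Fin n → ZMod m) : X :=
  ∑ y : Fin n → ZMod m, ν y • f (x - y)

/-! With `g = f*ν` and `c = (m/2)ε`, split
`f(x+c) - f(x) = (f(x+c) - g(x+c)) + (g(x+c) - g(x)) + (g(x) - f(x))`.
By translation invariance of `μ` both outer terms cost `∫ ‖g - f‖^p`. Since `c = k•(2ε)` with
`k = m/4`, the middle term telescopes into `k` steps of length `2ε`, each a translate of
`g(x+ε) - g(x-ε)`, and convexity of `t ↦ t^p` pays the factor `k^(p-1)` for the `k` steps. -/

lemma norm_sum_rpow_le_card_rpow_mul_sum {X ι : Type*} [NormedAddCommGroup X] (s : Finset ι)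
    (z : ι → X) {p : ℝ} (hp : 1 ≤ p) :
    ‖∑ i ∈ s, z i‖ ^ p ≤ (#s : ℝ) ^ (p - 1) * ∑ i ∈ s, ‖z i‖ ^ p :=
  calc ‖∑ i ∈ s, z i‖ ^ p ≤ (∑ i ∈ s, ‖z i‖) ^ p := by
        gcongr
        exact norm_sum_le _ _
    _ ≤ _ := Real.rpow_sum_le_const_mul_sum_rpow_of_nonneg s hp fun i _ => norm_nonneg _

lemma norm_add_add_rpow_le {X : Type*} [NormedAddCommGroup X] {p : ℝ} (hp : 1 ≤ p) (a b c : X) :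
    ‖a + b + c‖ ^ p ≤ 3 ^ (p - 1) * (‖a‖ ^ p + ‖b‖ ^ p + ‖c‖ ^ p) := by
  simpa [Fin.sum_univ_three, add_assoc] using
    norm_sum_rpow_le_card_rpow_mul_sum univ ![a, b, c] hp

section FiniteGroup

variable {G X : Type*} [AddCommGroup G] [Fintype G] [NormedAddCommGroup X]

lemma sum_norm_sub_nsmul_rpow_le {p : ℝ} (hp : 1 ≤ p) (g : G → X) (d : G) (k : ℕ) :
    ∑ x, ‖g (x + k • d) - g x‖ ^ p ≤ (k : ℝ) ^ p * ∑ x, ‖g (x + d) - g x‖ ^ p := by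
  set S := ∑ x, ‖g (x + d) - g x‖ ^ p
  have step_translate (j : ℕ) : ∑ x, ‖g (x + (j + 1) • d) - g (x + j • d)‖ ^ p = S := by
    simpa [succ_nsmul, add_assoc] using
      Equiv.sum_comp (Equiv.addRight (j • d)) fun y => ‖g (y + d) - g y‖ ^ p
  calc ∑ x, ‖g (x + k • d) - g x‖ ^ p
      ≤ ∑ x, (k : ℝ) ^ (p - 1) * ∑ j ∈ range k, ‖g (x + (j + 1) • d) - g (x + j • d)‖ ^ p := by
        gcongr with x
        have telescope :
            g (x + k • d) - g x = ∑ j ∈ range k, (g (x + (j + 1) • d) - g (x + j • d)) := by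
          simp [sum_range_sub fun j => g (x + j • d)]
        simpa [telescope] using norm_sum_rpow_le_card_rpow_mul_sum (range k)
          (fun j => g (x + (j + 1) • d) - g (x + j • d)) hp
    _ = (k : ℝ) ^ (p - 1) * ∑ j ∈ range k, ∑ x, ‖g (x + (j + 1) • d) - g (x + j • d)‖ ^ p := by
        rw [← mul_sum, sum_comm]
    _ = (k : ℝ) ^ (p - 1) * (k * S) := by simp [step_translate]
    _ = (k : ℝ) ^ p * S := by
        rw [← mul_assoc, ← Real.rpow_add_one' (y := p - 1) k.cast_nonneg (by linarith),
          sub_add_cancel]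

lemma sum_norm_sub_two_mul_nsmul_rpow_le {p : ℝ} (hp : 1 ≤ p) (f g : G → X) (e : G) (k : ℕ) :
    ∑ x, ‖f (x + (2 * k) • e) - f x‖ ^ p ≤
      2 * 3 ^ (p - 1) * ∑ x, ‖g x - f x‖ ^ p +
        3 ^ (p - 1) * (k : ℝ) ^ p * ∑ x, ‖g (x + e) - g (x - e)‖ ^ p := by
  set c := (2 * k) • e
  have outer_translate : ∑ x, ‖g (x + c) - f (x + c)‖ ^ p = ∑ x, ‖g x - f x‖ ^ p :=
    Equiv.sum_comp (Equiv.addRight c) fun y => ‖g y - f y‖ ^ p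
  have middle : ∑ x, ‖g (x + c) - g x‖ ^ p ≤ (k : ℝ) ^ p * ∑ x, ‖g (x + e) - g (x - e)‖ ^ p := by
    have centre : ∑ x, ‖g (x + 2 • e) - g x‖ ^ p = ∑ x, ‖g (x + e) - g (x - e)‖ ^ p := by
      rw [← Equiv.sum_comp (Equiv.subRight e)]
      refine sum_congr rfl fun x _ => ?_
      rw [Equiv.subRight_apply, show x - e + 2 • e = x + e by abel]
    rw [← centre]
    simpa only [c, mul_comm 2 k, mul_nsmul] using sum_norm_sub_nsmul_rpow_le hp g (2 • e) k
  calc ∑ x, ‖f (x + c) - f x‖ ^ p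
      = ∑ x, ‖-(g (x + c) - f (x + c)) + (g (x + c) - g x) + (g x - f x)‖ ^ p := by
        refine sum_congr rfl fun x _ => ?_
        congr 2
        abel
    _ ≤ ∑ x, 3 ^ (p - 1) * (‖g (x + c) - f (x + c)‖ ^ p + ‖g (x + c) - g x‖ ^ p
          + ‖g x - f x‖ ^ p) := by
        gcongr with x
        simpa only [norm_neg] using norm_add_add_rpow_le hp (-(g (x + c) - f (x + c))) _ _
    _ = 3 ^ (p - 1) * (2 * ∑ x, ‖g x - f x‖ ^ p + ∑ x, ‖g (x + c) - g x‖ ^ p) := by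
        rw [← mul_sum, sum_add_distrib, sum_add_distrib, outer_translate]
        ring
    _ ≤ 3 ^ (p - 1) * (2 * ∑ x, ‖g x - f x‖ ^ p +
          (k : ℝ) ^ p * ∑ x, ‖g (x + e) - g (x - e)‖ ^ p) :=
        mul_le_mul_of_nonneg_left (add_le_add_right middle _) (by positivity)
    _ = _ := by ring

end FiniteGroup

theorem smoothing_approximation_scheme_general (p : ℝ) (hp : 1 ≤ p)
    (X : Type*) [NormedAddCommGroup X] [NormedSpace ℝ X]
    (n m : ℕ) [NeZero m] (hm : m % 4 = 0)
    (ν : (Fin n → ZMod m) → ℝ)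
    (f : (Fin n → ZMod m) → X) (ε : Fin n → Bool) :
    (∑ x : Fin n → ZMod m, ‖f (x + (m / 2) • signVec m n ε) - f x‖ ^ p) / (m : ℝ) ^ n ≤
      2 * 3 ^ (p - 1) *
          ((∑ x : Fin n → ZMod m, ‖conv ν f x - f x‖ ^ p) / (m : ℝ) ^ n) +
        3 ^ (p - 1) * ((m : ℝ) / 4) ^ p *
          ((∑ x : Fin n → ZMod m,
              ‖conv ν f (x + signVec m n ε) - conv ν f (x - signVec m n ε)‖ ^ p) /
            (m : ℝ) ^ n) := by
  obtain ⟨k, rfl⟩ : 4 ∣ m := Nat.dvd_of_mod_eq_zero hm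
  have half : 4 * k / 2 = 2 * k := by omega
  have quarter : ((4 * k : ℕ) : ℝ) / 4 = k := by push_cast; ring
  rw [half, quarter, ← mul_div_assoc, ← mul_div_assoc, ← add_div]
  gcongr
  exact sum_norm_sub_two_mul_nsmul_rpow_le hp f (conv ν f) _ k

/-- The basic smoothing-and-approximation inequality: for `m` divisible by `4`, a probability
measure `ν` on `ℤ_m^n`, `f : ℤ_m^n → X` and any sign vector `ε ∈ {-1,1}^n`,
`∫ ‖f(x + (m/2)ε) - f(x)‖^p dμ(x) ≤ 2·3^(p-1) ∫ ‖f*ν(x) - f(x)‖^p dμ(x)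
  + 3^(p-1) (m/4)^p ∫ ‖f*ν(x+ε) - f*ν(x-ε)‖^p dμ(x)`. -/
theorem smoothing_approximation_scheme (p : ℝ) (hp : 1 ≤ p)
    (X : Type*) [NormedAddCommGroup X] [NormedSpace ℝ X] [CompleteSpace X]
    (n m : ℕ) [NeZero m] (hm : m % 4 = 0)
    (ν : (Fin n → ZMod m) → ℝ) (hν : ∀ y, 0 ≤ ν y)
    (hν1 : ∑ y : Fin n → ZMod m, ν y = 1)
    (f : (Fin n → ZMod m) → X) (ε : Fin n → Bool) :
    (∑ x : Fin n → ZMod m, ‖f (x + (m / 2) • signVec m n ε) - f x‖ ^ p) / (m : ℝ) ^ n ≤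
      2 * 3 ^ (p - 1) *
          ((∑ x : Fin n → ZMod m, ‖conv ν f x - f x‖ ^ p) / (m : ℝ) ^ n) +
        3 ^ (p - 1) * ((m : ℝ) / 4) ^ p *
          ((∑ x : Fin n → ZMod m,
              ‖conv ν f (x + signVec m n ε) - conv ν f (x - signVec m n ε)‖ ^ p) /
            (m : ℝ) ^ n) :=
  smoothing_approximation_scheme_general p hp X n m hm ν f ε
end

section
/- Let p ≥ 1, let X be a Banach space, let n ∈ ℕ, let m ≥ 2 be an even integer, let k be an odd integer with 0 < k < m/2, and let f : ℤ_m^n → X. Then ∫_{ℤ_m^n} ‖Δ_{[n]}f(x) − f(x)‖_X^p dμ(x) ≤ (k−1)^p n^{p−1} Σ_{j=1}^n ∫_{ℤ_m^n} ‖f(x + e_j) − f(x)‖_X^p dμ(x). -/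
/-! For fixed `f`, the quantity `(∑ₓ ‖f (x + g) - f x‖ ^ p) ^ (1/p)` is subadditive in the shift `g`
(Minkowski), so a shift `y ∈ L` costs at most `∑ⱼ |yⱼ|` unit shifts `e_j`, where every `|yⱼ| < k`;
the power-mean inequality then turns the sum over `j` into the factor `n ^ (p - 1)`. Finally,
`Δf - f` is the average of the differences `f (· + y) - f` over `y ∈ L`, and by convexity of
`t ↦ t ^ p` it costs no more than the worst of them. -/

open Finset

open scoped Classical in
/-- For `B ⊆ [n]`, `L_B` is the set of `y ∈ ℤ_m^n` such that `y_i = 0` for `i ∉ B`,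
every coordinate `y_i` is even, and `d_{ℤ_m^n}(0,y) = ∑_i min(y_i, m - y_i) < k`. -/
noncomputable def LB (m n k : ℕ) [NeZero m] (B : Finset (Fin n)) :
    Finset (Fin n → ZMod m) :=
  Finset.univ.filter fun y =>
    (∀ i, i ∉ B → y i = 0) ∧ (∀ i, Even (y i).val) ∧
      (∑ i, min (y i).val (m - (y i).val)) < k

/-- The averaging operator `Δ_B f(x) = (1/|L_B|) ∑_{y ∈ L_B} f(x + y)`. -/
noncomputable def Delta (m n k : ℕ) [NeZero m] {X : Type*} [NormedAddCommGroup X]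
    [NormedSpace ℝ X] (B : Finset (Fin n)) (f : (Fin n → ZMod m) → X)
    (x : Fin n → ZMod m) : X :=
  ((LB m n k B).card : ℝ)⁻¹ • ∑ y ∈ LB m n k B, f (x + y)

section ShiftLpNorm

variable {G X : Type*} [AddCommGroup G] [Fintype G] [NormedAddCommGroup X] {p : ℝ}

noncomputable def shiftLpNorm (p : ℝ) (f : G → X) (g : G) : ℝ :=
  (∑ x, ‖f (x + g) - f x‖ ^ p) ^ (1 / p)

lemma sum_norm_shift_sub_rpow_nonneg (p : ℝ) (f : G → X) (g : G) :
    0 ≤ ∑ x, ‖f (x + g) - f x‖ ^ p :=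
  Finset.sum_nonneg fun _ _ => Real.rpow_nonneg (norm_nonneg _) _

lemma shiftLpNorm_nonneg (p : ℝ) (f : G → X) (g : G) : 0 ≤ shiftLpNorm p f g :=
  Real.rpow_nonneg (sum_norm_shift_sub_rpow_nonneg p f g) _

lemma shiftLpNorm_rpow (hp : p ≠ 0) (f : G → X) (g : G) :
    shiftLpNorm p f g ^ p = ∑ x, ‖f (x + g) - f x‖ ^ p := by
  rw [shiftLpNorm, ← Real.rpow_mul (sum_norm_shift_sub_rpow_nonneg p f g), one_div,
    inv_mul_cancel₀ hp, Real.rpow_one]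

lemma shiftLpNorm_zero (hp : p ≠ 0) (f : G → X) : shiftLpNorm p f 0 = 0 := by
  simp [shiftLpNorm, Real.zero_rpow hp, hp]

lemma shiftLpNorm_neg (p : ℝ) (f : G → X) (g : G) : shiftLpNorm p f (-g) = shiftLpNorm p f g := by
  rw [shiftLpNorm, shiftLpNorm, ← Equiv.sum_comp (Equiv.addRight g)]
  simp_rw [Equiv.coe_addRight, add_neg_cancel_right, norm_sub_rev]

lemma shiftLpNorm_add_le (hp : 1 ≤ p) (f : G → X) (g h : G) :
    shiftLpNorm p f (g + h) ≤ shiftLpNorm p f g + shiftLpNorm p f h := by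
  have hg : ∑ x, ‖f (x + h + g) - f (x + h)‖ ^ p = ∑ x, ‖f (x + g) - f x‖ ^ p :=
    Equiv.sum_comp (Equiv.addRight h) fun x => ‖f (x + g) - f x‖ ^ p
  have htriangle (x : G) :
      ‖f (x + (g + h)) - f x‖ ≤ ‖f (x + h + g) - f (x + h)‖ + ‖f (x + h) - f x‖ := by
    rw [add_comm g h, ← add_assoc]
    exact norm_sub_le_norm_sub_add_norm_sub _ _ _
  calc shiftLpNorm p f (g + h)
      ≤ (∑ x, (‖f (x + h + g) - f (x + h)‖ + ‖f (x + h) - f x‖) ^ p) ^ (1 / p) := by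
        unfold shiftLpNorm
        gcongr with x
        exact htriangle x
    _ ≤ shiftLpNorm p f g + shiftLpNorm p f h := by
        rw [shiftLpNorm, shiftLpNorm, ← hg]
        exact Real.Lp_add_le_of_nonneg _ hp (fun _ _ => norm_nonneg _) fun _ _ => norm_nonneg _

lemma shiftLpNorm_sum_le (hp : 1 ≤ p) (f : G → X) {ι : Type*} (s : Finset ι) (a : ι → G) :
    shiftLpNorm p f (∑ i ∈ s, a i) ≤ ∑ i ∈ s, shiftLpNorm p f (a i) := by
  induction s using Finset.cons_induction with
  | empty => simp [shiftLpNorm_zero (by linarith : p ≠ 0)]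
  | cons i s hi ih =>
      rw [Finset.sum_cons, Finset.sum_cons]
      exact (shiftLpNorm_add_le hp f _ _).trans (add_le_add_right ih _)

lemma shiftLpNorm_zsmul_le (hp : 1 ≤ p) (f : G → X) (z : ℤ) (g : G) :
    shiftLpNorm p f (z • g) ≤ z.natAbs * shiftLpNorm p f g := by
  have hnsmul (t : ℕ) : shiftLpNorm p f (t • g) ≤ t * shiftLpNorm p f g := by
    simpa using shiftLpNorm_sum_le hp f (Finset.range t) fun _ => g
  obtain ⟨t, rfl | rfl⟩ := Int.eq_nat_or_neg z
  · simpa using hnsmul t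
  · simpa [shiftLpNorm_neg] using hnsmul t

end ShiftLpNorm

section Torus

variable {ι X : Type*} [Fintype ι] [DecidableEq ι] [NormedAddCommGroup X] {m : ℕ} [NeZero m]
  {p : ℝ}

/-- `(y j).valMinAbs.natAbs` is the paper's `|y_j| = min (y_j, m - y_j)`. -/
lemma shiftLpNorm_le_sum_natAbs_valMinAbs (hp : 1 ≤ p) (f : (ι → ZMod m) → X)
    (y : ι → ZMod m) :
    shiftLpNorm p f y ≤ ∑ j, (y j).valMinAbs.natAbs * shiftLpNorm p f (Pi.single j 1) := by
  have hsingle (j : ι) : Pi.single j (y j) = (y j).valMinAbs • (Pi.single j 1 : ι → ZMod m) := by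
    rw [← Pi.single_smul, zsmul_one, ZMod.coe_valMinAbs]
  calc shiftLpNorm p f y = shiftLpNorm p f (∑ j, Pi.single j (y j)) := by
        rw [Finset.univ_sum_single]
    _ ≤ ∑ j, shiftLpNorm p f (Pi.single j (y j)) := shiftLpNorm_sum_le hp f _ _
    _ ≤ _ := Finset.sum_le_sum fun j _ => hsingle j ▸ shiftLpNorm_zsmul_le hp f _ _

end Torus

lemma zero_mem_LB {m n k : ℕ} [NeZero m] (hk : 0 < k) (B : Finset (Fin n)) :
    (0 : Fin n → ZMod m) ∈ LB m n k B := by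
  simp [LB, hk]

lemma natAbs_valMinAbs_lt_of_mem_LB {m n k : ℕ} [NeZero m] {B : Finset (Fin n)}
    {y : Fin n → ZMod m} (hy : y ∈ LB m n k B) (j : Fin n) : (y j).valMinAbs.natAbs < k := by
  rw [LB, Finset.mem_filter] at hy
  rw [ZMod.valMinAbs_natAbs_eq_min]
  exact (Finset.single_le_sum (fun i _ => Nat.zero_le _) (Finset.mem_univ j)).trans_lt hy.2.2.2

lemma sum_norm_shift_sub_rpow_le_of_mem_LB {p : ℝ} (hp : 1 ≤ p) {X : Type*}
    [NormedAddCommGroup X] {m n k : ℕ} [NeZero m] (hk : 0 < k) {B : Finset (Fin n)}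
    (f : (Fin n → ZMod m) → X) {y : Fin n → ZMod m} (hy : y ∈ LB m n k B) :
    ∑ x, ‖f (x + y) - f x‖ ^ p ≤
      ((k : ℝ) - 1) ^ p * (n : ℝ) ^ (p - 1) * ∑ j, ∑ x, ‖f (x + Pi.single j 1) - f x‖ ^ p := by
  have hp0 : p ≠ 0 := by linarith
  set N : Fin n → ℝ := fun j => shiftLpNorm p f (Pi.single j 1)
  have hN (j : Fin n) : 0 ≤ N j := shiftLpNorm_nonneg p f _
  have hcoord (j : Fin n) : ((y j).valMinAbs.natAbs : ℝ) ≤ k - 1 := by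
    rw [le_sub_iff_add_le]
    exact_mod_cast natAbs_valMinAbs_lt_of_mem_LB hy j
  have hlinear : shiftLpNorm p f y ≤ (k - 1) * ∑ j, N j :=
    calc shiftLpNorm p f y ≤ ∑ j, (y j).valMinAbs.natAbs * N j :=
          shiftLpNorm_le_sum_natAbs_valMinAbs hp f y
      _ ≤ ∑ j, (k - 1) * N j :=
          Finset.sum_le_sum fun j _ => mul_le_mul_of_nonneg_right (hcoord j) (hN j)
      _ = (k - 1) * ∑ j, N j := (Finset.mul_sum _ _ _).symm
  have hk1 : (0 : ℝ) ≤ k - 1 := by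
    rw [sub_nonneg]
    exact_mod_cast hk
  calc ∑ x, ‖f (x + y) - f x‖ ^ p = shiftLpNorm p f y ^ p := (shiftLpNorm_rpow hp0 f y).symm
    _ ≤ ((k - 1) * ∑ j, N j) ^ p := by gcongr; exact shiftLpNorm_nonneg p f y
    _ = (k - 1) ^ p * (∑ j, N j) ^ p :=
        Real.mul_rpow hk1 (Finset.sum_nonneg fun j _ => hN j)
    _ ≤ (k - 1) ^ p * ((n : ℝ) ^ (p - 1) * ∑ j, N j ^ p) := by
        gcongr
        simpa using Real.rpow_sum_le_const_mul_sum_rpow_of_nonneg Finset.univ hp fun j _ => hN j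
    _ = _ := by simp only [N, shiftLpNorm_rpow hp0]; ring

section Averaging

variable {G X : Type*} [AddCommGroup G] [Fintype G] [NormedAddCommGroup X] [NormedSpace ℝ X]
  {p : ℝ}

lemma norm_average_rpow_le {α : Type*} (hp : 1 ≤ p) {s : Finset α} (hs : s.Nonempty)
    (v : α → X) :
    ‖(#s : ℝ)⁻¹ • ∑ i ∈ s, v i‖ ^ p ≤ (#s : ℝ)⁻¹ * ∑ i ∈ s, ‖v i‖ ^ p := by
  have hw : (0 : ℝ) ≤ (#s : ℝ)⁻¹ := by positivity
  have hw_sum : ∑ _i ∈ s, (#s : ℝ)⁻¹ = 1 := by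
    rw [Finset.sum_const, nsmul_eq_mul, mul_inv_cancel₀ (by exact_mod_cast hs.card_ne_zero)]
  calc ‖(#s : ℝ)⁻¹ • ∑ i ∈ s, v i‖ ^ p ≤ (∑ i ∈ s, (#s : ℝ)⁻¹ * ‖v i‖) ^ p := by
        rw [norm_smul, Real.norm_of_nonneg hw, ← Finset.mul_sum]
        gcongr
        exact norm_sum_le _ _
    _ ≤ ∑ i ∈ s, (#s : ℝ)⁻¹ * ‖v i‖ ^ p :=
        Real.rpow_arith_mean_le_arith_mean_rpow _ _ _ (fun _ _ => hw) hw_sum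
          (fun _ _ => norm_nonneg _) hp
    _ = (#s : ℝ)⁻¹ * ∑ i ∈ s, ‖v i‖ ^ p := (Finset.mul_sum _ _ _).symm

lemma sum_norm_average_sub_rpow_le (hp : 1 ≤ p) {L : Finset G} (hL : L.Nonempty) (f : G → X)
    {C : ℝ} (hC : ∀ y ∈ L, ∑ x, ‖f (x + y) - f x‖ ^ p ≤ C) :
    ∑ x, ‖(#L : ℝ)⁻¹ • ∑ y ∈ L, f (x + y) - f x‖ ^ p ≤ C := by
  have hw : (0 : ℝ) < #L := by exact_mod_cast hL.card_pos
  have haverage (x : G) :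
      (#L : ℝ)⁻¹ • ∑ y ∈ L, f (x + y) - f x = (#L : ℝ)⁻¹ • ∑ y ∈ L, (f (x + y) - f x) := by
    rw [Finset.sum_sub_distrib, smul_sub, Finset.sum_const, ← Nat.cast_smul_eq_nsmul ℝ,
      smul_smul, inv_mul_cancel₀ hw.ne', one_smul]
  calc ∑ x, ‖(#L : ℝ)⁻¹ • ∑ y ∈ L, f (x + y) - f x‖ ^ p
      ≤ ∑ x, (#L : ℝ)⁻¹ * ∑ y ∈ L, ‖f (x + y) - f x‖ ^ p :=
        Finset.sum_le_sum fun x _ => haverage x ▸ norm_average_rpow_le hp hL _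
    _ = (#L : ℝ)⁻¹ * ∑ y ∈ L, ∑ x, ‖f (x + y) - f x‖ ^ p := by
        rw [← Finset.mul_sum, Finset.sum_comm]
    _ ≤ (#L : ℝ)⁻¹ * ∑ _y ∈ L, C := by gcongr with y hy; exact hC y hy
    _ = C := by rw [Finset.sum_const, nsmul_eq_mul, inv_mul_cancel_left₀ hw.ne']

end Averaging

theorem approximation_property_general (p : ℝ) (hp : 1 ≤ p)
    (X : Type*) [NormedAddCommGroup X] [NormedSpace ℝ X]
    (n m k : ℕ) [NeZero m] (hk0 : 0 < k)
    (f : (Fin n → ZMod m) → X) :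
    (∑ x : Fin n → ZMod m, ‖Delta m n k Finset.univ f x - f x‖ ^ p) / (m : ℝ) ^ n ≤
      ((k : ℝ) - 1) ^ p * (n : ℝ) ^ (p - 1) *
        ∑ j : Fin n,
          (∑ x : Fin n → ZMod m, ‖f (x + Pi.single j 1) - f x‖ ^ p) / (m : ℝ) ^ n := by
  rw [← Finset.sum_div, ← mul_div_assoc]
  gcongr
  exact sum_norm_average_sub_rpow_le hp ⟨0, zero_mem_LB hk0 _⟩ f fun y hy =>
    sum_norm_shift_sub_rpow_le_of_mem_LB hp hk0 f hy

/-- The approximation property: for every Banach space `X`, every even `m ≥ 2`, every odd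
`0 < k < m/2` and every `f : ℤ_m^n → X`,
`∫ ‖Δ_{[n]}f(x) - f(x)‖^p dμ(x) ≤ (k-1)^p n^(p-1) ∑_j ∫ ‖f(x+e_j) - f(x)‖^p dμ(x)`. -/
theorem approximation_property (p : ℝ) (hp : 1 ≤ p)
    (X : Type*) [NormedAddCommGroup X] [NormedSpace ℝ X] [CompleteSpace X]
    (n m k : ℕ) [NeZero m] (hm2 : 2 ≤ m) (hme : m % 2 = 0)
    (hk : Odd k) (hk0 : 0 < k) (hkm : 2 * k < m)
    (f : (Fin n → ZMod m) → X) :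
    (∑ x : Fin n → ZMod m, ‖Delta m n k Finset.univ f x - f x‖ ^ p) / (m : ℝ) ^ n ≤
      ((k : ℝ) - 1) ^ p * (n : ℝ) ^ (p - 1) *
        ∑ j : Fin n,
          (∑ x : Fin n → ZMod m, ‖f (x + Pi.single j 1) - f x‖ ^ p) / (m : ℝ) ^ n :=
  approximation_property_general p hp X n m k hk0 f
end

section
/- Let p ≥ 1, let X be a Banach space, let n ∈ ℕ, let m ≥ 2 be an even integer, and let f : ℤ_m^n → X. Then for every z ∈ ℤ_m^n, ∫_{ℤ_m^n} ‖f(x + z) − f(x)‖_X^p dμ(x) ≤ ‖z‖^{p−1} Σ_{j=1}^n |z_j| ∫_{ℤ_m^n} ‖f(x + e_j) − f(x)‖_X^p dμ(x), where |z_j| = min{z_j, m − z_j} (with the representative of z_j taken in {0,…,m−1}) and ‖z‖ = Σ_{j=1}^n |z_j|. -/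
open Finset

/-- For `z ∈ ℤ_m`, `|z| = min(z, m - z)`, where the representative of `z` is taken in
`{0, …, m-1}`. -/
def zmodAbs (m : ℕ) [NeZero m] (z : ZMod m) : ℕ := min z.val (m - z.val)

section aux

variable {X : Type*} [NormedAddCommGroup X] {G : Type*} [AddCommGroup G] [Fintype G]

/-- Translation invariance of sums over a finite group. -/
lemma shift_sum (g : G → ℝ) (c : G) : (∑ x : G, g (x + c)) = ∑ x : G, g x :=
  Fintype.sum_equiv (Equiv.addRight c) _ g (fun x => rfl)

lemma norm_sum_rpow_le {ι : Type*} (s : Finset ι) (a : ι → X) {p : ℝ} (hp : 1 ≤ p) :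
    ‖∑ i ∈ s, a i‖ ^ p ≤ (s.card : ℝ) ^ (p - 1) * ∑ i ∈ s, ‖a i‖ ^ p := by
  calc ‖∑ i ∈ s, a i‖ ^ p ≤ (∑ i ∈ s, ‖a i‖) ^ p := by
        apply Real.rpow_le_rpow (norm_nonneg _) (norm_sum_le _ _)
        linarith
    _ ≤ (s.card : ℝ) ^ (p - 1) * ∑ i ∈ s, ‖a i‖ ^ p :=
        Real.rpow_sum_le_const_mul_sum_rpow_of_nonneg s hp (fun i _ => norm_nonneg _)

/-- Path/telescoping bound for a sequence of steps. -/
lemma path_sum (f : G → X) (step : ℕ → G) (N : ℕ) {p : ℝ} (hp : 1 ≤ p) :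
    (∑ x : G, ‖f (x + ∑ i ∈ range N, step i) - f x‖ ^ p) ≤
      (N : ℝ) ^ (p - 1) * ∑ i ∈ range N, ∑ x : G, ‖f (x + step i) - f x‖ ^ p := by
  set S : ℕ → G := fun k => ∑ i ∈ range k, step i with hS
  calc (∑ x : G, ‖f (x + S N) - f x‖ ^ p)
      = ∑ x : G, ‖∑ i ∈ range N, (f (x + S (i + 1)) - f (x + S i))‖ ^ p := by
        refine Fintype.sum_congr _ _ fun x => ?_
        rw [Finset.sum_range_sub (fun k => f (x + S k))]
        simp [hS]
    _ ≤ ∑ x : G, ((N : ℝ) ^ (p - 1) *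
          ∑ i ∈ range N, ‖f (x + S (i + 1)) - f (x + S i)‖ ^ p) := by
        refine Finset.sum_le_sum fun x _ => ?_
        simpa using norm_sum_rpow_le (range N) (fun i => f (x + S (i+1)) - f (x + S i)) hp
    _ = (N : ℝ) ^ (p - 1) * ∑ i ∈ range N, ∑ x : G, ‖f (x + S i + step i) - f (x + S i)‖ ^ p := by
        rw [← Finset.mul_sum, Finset.sum_comm]
        congr 1
        refine Finset.sum_congr rfl fun i _ => Fintype.sum_congr _ _ fun x => ?_
        rw [hS]
        simp [Finset.sum_range_succ, add_assoc]
    _ = (N : ℝ) ^ (p - 1) * ∑ i ∈ range N, ∑ x : G, ‖f (x + step i) - f x‖ ^ p := by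
        congr 1
        refine Finset.sum_congr rfl fun i _ => ?_
        exact shift_sum (fun x => ‖f (x + step i) - f x‖ ^ p) (S i)

end aux

/-- For every Banach space `X`, every even `m ≥ 2`, every `f : ℤ_m^n → X` and every
`z ∈ ℤ_m^n`, `∫ ‖f(x+z) - f(x)‖^p dμ(x) ≤ ‖z‖^(p-1) ∑_j |z_j| ∫ ‖f(x+e_j) - f(x)‖^p dμ(x)`,
where `‖z‖ = ∑_j |z_j|`. -/
theorem path_bound (p : ℝ) (hp : 1 ≤ p)
    (X : Type*) [NormedAddCommGroup X] [NormedSpace ℝ X] [CompleteSpace X]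
    (n m : ℕ) [NeZero m] (hm2 : 2 ≤ m) (hme : m % 2 = 0)
    (f : (Fin n → ZMod m) → X) (z : Fin n → ZMod m) :
    (∑ x : Fin n → ZMod m, ‖f (x + z) - f x‖ ^ p) / (m : ℝ) ^ n ≤
      ((∑ j, zmodAbs m (z j) : ℕ) : ℝ) ^ (p - 1) *
        ∑ j : Fin n, (zmodAbs m (z j) : ℝ) *
          ((∑ x : Fin n → ZMod m, ‖f (x + Pi.single j 1) - f x‖ ^ p) / (m : ℝ) ^ n) := by
  classical
  set a : Fin n → ℕ := fun j => zmodAbs m (z j) with ha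
  set c : Fin n → ZMod m := fun j => if (z j).val ≤ m - (z j).val then 1 else -1 with hc
  set d : Fin n → (Fin n → ZMod m) := fun j => Pi.single j (c j) with hd
  set N : ℕ := ∑ j, a j with hN
  -- the basic displacement fact
  have hac : ∀ j, (a j) • (c j) = z j := by
    intro j
    have hvm : (z j).val ≤ m := (ZMod.val_lt (z j)).le
    rw [ha, hc]
    simp only [zmodAbs]
    split_ifs with h
    · rw [min_eq_left h, nsmul_eq_mul, mul_one, ZMod.natCast_val, ZMod.cast_id]
    · rw [min_eq_right (by omega), nsmul_eq_mul, mul_neg_one, Nat.cast_sub hvm,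
        ZMod.natCast_self, zero_sub, neg_neg, ZMod.natCast_val, ZMod.cast_id]
  have hz : z = ∑ j, (a j) • d j := by
    conv_lhs => rw [← Finset.univ_sum_single z]
    refine Finset.sum_congr rfl fun j _ => ?_
    rw [hd, ← hac j]
    ext k
    rcases eq_or_ne k j with rfl | hk
    · simp
    · simp [Pi.single_eq_of_ne hk]
  -- index bookkeeping
  have hcard : Fintype.card (Σ j : Fin n, Fin (a j)) = N := by
    simp [Fintype.card_sigma, hN]
  set e : Fin N ≃ (Σ j : Fin n, Fin (a j)) := (Fintype.equivFinOfCardEq hcard).symm with he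
  set step : ℕ → (Fin n → ZMod m) := fun i => if h : i < N then d ((e ⟨i, h⟩).1) else 0
    with hstep
  have hsig : ∀ (g : (Fin n → ZMod m) → ℝ),
      (∑ i ∈ range N, g (step i)) = ∑ σ : (Σ j : Fin n, Fin (a j)), g (d σ.1) := by
    intro g
    rw [Finset.sum_range fun i => g (step i)]
    have h1 : ∀ i : Fin N, g (step i) = g (d ((e i).1)) := by
      intro i; rw [hstep]; simp [i.isLt]
    rw [Fintype.sum_congr _ _ h1]
    exact Equiv.sum_comp e (fun σ => g (d σ.1))
  have hsig_eval : ∀ (g : (Fin n → ZMod m) → ℝ),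
      (∑ σ : (Σ j : Fin n, Fin (a j)), g (d σ.1)) = ∑ j, (a j : ℝ) * g (d j) := by
    intro g
    rw [← Finset.univ_sigma_univ, Finset.sum_sigma]
    simp [mul_comm]
  have hstep_total : (∑ i ∈ range N, step i) = z := by
    rw [Finset.sum_range fun i => step i]
    have h1 : ∀ i : Fin N, step i = d ((e i).1) := by
      intro i; rw [hstep]; simp [i.isLt]
    rw [Fintype.sum_congr _ _ h1, Equiv.sum_comp e (fun σ => d σ.1),
      ← Finset.univ_sigma_univ, Finset.sum_sigma, hz]
    simp
  -- the negative-direction identity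
  have hTneg : ∀ s : Fin n → ZMod m,
      (∑ x : Fin n → ZMod m, ‖f (x + -s) - f x‖ ^ p)
        = ∑ x : Fin n → ZMod m, ‖f (x + s) - f x‖ ^ p := by
    intro s
    rw [← shift_sum (fun x => ‖f (x + -s) - f x‖ ^ p) s]
    refine Fintype.sum_congr _ _ fun x => ?_
    simp [norm_sub_rev (f (x + s)) (f x)]
  have hTd : ∀ j, (∑ x : Fin n → ZMod m, ‖f (x + d j) - f x‖ ^ p)
      = ∑ x : Fin n → ZMod m, ‖f (x + Pi.single j 1) - f x‖ ^ p := by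
    intro j
    by_cases h : (z j).val ≤ m - (z j).val
    · simp only [hd, hc, if_pos h]
    · simp only [hd, hc, if_neg h]
      have hneg : (Pi.single j (-1 : ZMod m) : Fin n → ZMod m) = -(Pi.single j 1) := by
        ext k
        rcases eq_or_ne k j with rfl | hk
        · simp
        · simp [Pi.single_eq_of_ne hk]
      rw [hneg, hTneg]
  -- main estimate
  have key := path_sum f step N hp
  rw [hstep_total,
    hsig (fun s => ∑ x : Fin n → ZMod m, ‖f (x + s) - f x‖ ^ p),
    hsig_eval (fun s => ∑ x : Fin n → ZMod m, ‖f (x + s) - f x‖ ^ p)] at key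
  have hmn : (0 : ℝ) < (m : ℝ) ^ n := by positivity
  rw [div_le_iff₀ hmn]
  have hsum : (∑ j, (a j : ℝ) * ∑ x : Fin n → ZMod m, ‖f (x + d j) - f x‖ ^ p)
      = (∑ j : Fin n, (a j : ℝ) *
          ((∑ x : Fin n → ZMod m, ‖f (x + Pi.single j 1) - f x‖ ^ p) / (m : ℝ) ^ n))
        * (m : ℝ) ^ n := by
    rw [Finset.sum_mul]
    refine Finset.sum_congr rfl fun j _ => ?_
    rw [hTd j]
    field_simp
  calc (∑ x : Fin n → ZMod m, ‖f (x + z) - f x‖ ^ p)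
      ≤ (N : ℝ) ^ (p - 1) * ((∑ j : Fin n, (a j : ℝ) *
          ((∑ x : Fin n → ZMod m, ‖f (x + Pi.single j 1) - f x‖ ^ p) / (m : ℝ) ^ n))
            * (m : ℝ) ^ n) := by rw [← hsum]; exact key
    _ = _ := by ring
end

section
/- Let p ≥ 1, let X be a Banach space, let n ∈ ℕ, let m ≥ 2 be an even integer, let k be an odd integer with 0 < k < m/2, let 0 ≤ l ≤ i ≤ n, and let f : ℤ_m^n → X. Then for every fixed ε ∈ {−1,1}^n, ∫_{ℤ_m^n} ‖R_{i,l}f(x,ε)‖_X^p dμ(x) ≤ 2^p · binom(n,i)^{p−1} · binom(i,l)^p · Σ_{S ⊆ [n], |S| = i} ∫_{ℤ_m^n} ‖f(x + ε_{[n]∖S}) − f(x − ε_{[n]∖S})‖_X^p dμ(x). -/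
open Finset

/-- For `A ⊆ [n]` and `ε ∈ {-1,1}^n`, the vector `ε_A ∈ ℤ_m^n` which equals `ε` on the
coordinates of `A` and `0` elsewhere. -/
def signVecOn (m n : ℕ) (A : Finset (Fin n)) (ε : Fin n → Bool) : Fin n → ZMod m :=
  fun j => if j ∈ A then (if ε j then 1 else -1) else 0

open scoped Classical in
/-- `R_{i,l}f(x,ε) = ∑_{S ⊆ [n], |S|=i} ∑_{δ ∈ {-1,1}^S, ⟨δ_S,ε_S⟩ = i-2l}
[Δ_{[n]∖S}f(x + kδ_S + ε_{[n]∖S}) - Δ_{[n]∖S}f(x + kδ_S - ε_{[n]∖S})]`,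
where `δ ∈ {-1,1}^S` is encoded as `δ : Fin n → Bool` with `δ ≡ true` off `S`. -/
noncomputable def Rop (m n k : ℕ) [NeZero m] {X : Type*} [NormedAddCommGroup X]
    [NormedSpace ℝ X] (i l : ℕ) (f : (Fin n → ZMod m) → X)
    (x : Fin n → ZMod m) (ε : Fin n → Bool) : X :=
  ∑ S ∈ Finset.powersetCard i (Finset.univ : Finset (Fin n)),
    ∑ δ ∈ Finset.univ.filter (fun δ : Fin n → Bool =>
        (∀ j, j ∉ S → δ j = true) ∧
        (∑ j ∈ S, (if δ j then (1 : ℤ) else -1) * (if ε j then 1 else -1)) = (i : ℤ) - 2 * l),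
      (Delta m n k Sᶜ f (x + k • signVecOn m n S δ + signVecOn m n Sᶜ ε) -
       Delta m n k Sᶜ f (x + k • signVecOn m n S δ - signVecOn m n Sᶜ ε))

open Finset

section Aux

/-- Jensen-type inequality: `‖∑ v‖^p ≤ card^(p-1) * ∑ ‖v‖^p`. -/
lemma lemA {ι : Type*} {X : Type*} [NormedAddCommGroup X] (p : ℝ) (hp : 1 ≤ p)
    (s : Finset ι) (v : ι → X) :
    ‖∑ j ∈ s, v j‖ ^ p ≤ (s.card : ℝ) ^ (p - 1) * ∑ j ∈ s, ‖v j‖ ^ p := by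
  rcases s.eq_empty_or_nonempty with rfl | hs
  · simp [Real.zero_rpow (ne_of_gt (by linarith : (0:ℝ) < p))]
  · have hc : (0:ℝ) < s.card := by exact_mod_cast hs.card_pos
    have h1 : ‖∑ j ∈ s, v j‖ ^ p ≤ (∑ j ∈ s, ‖v j‖) ^ p :=
      Real.rpow_le_rpow (norm_nonneg _) (norm_sum_le s v) (by linarith)
    have h2 := Real.rpow_arith_mean_le_arith_mean_rpow s (fun _ => (s.card:ℝ)⁻¹)
      (fun j => ‖v j‖) (fun _ _ => by positivity)
      (by simp [Finset.sum_const, mul_inv_cancel₀ hc.ne']) (fun j _ => norm_nonneg _) hp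
    rw [← Finset.mul_sum, ← Finset.mul_sum] at h2
    have h3 : (∑ j ∈ s, ‖v j‖) ^ p
        = (s.card:ℝ) ^ p * ((s.card:ℝ)⁻¹ * ∑ j ∈ s, ‖v j‖) ^ p := by
      rw [← Real.mul_rpow hc.le (by positivity)]
      congr 1
      field_simp
    calc ‖∑ j ∈ s, v j‖ ^ p ≤ (∑ j ∈ s, ‖v j‖) ^ p := h1
      _ = (s.card:ℝ) ^ p * ((s.card:ℝ)⁻¹ * ∑ j ∈ s, ‖v j‖) ^ p := h3
      _ ≤ (s.card:ℝ) ^ p * ((s.card:ℝ)⁻¹ * ∑ j ∈ s, ‖v j‖ ^ p) :=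
          mul_le_mul_of_nonneg_left h2 (by positivity)
      _ = (s.card:ℝ) ^ (p - 1) * ∑ j ∈ s, ‖v j‖ ^ p := by
          rw [← mul_assoc, Real.rpow_sub hc, Real.rpow_one, div_eq_mul_inv]

lemma my_sum_translate {G : Type*} [AddCommGroup G] [Fintype G] (h : G → ℝ) (c : G) :
    ∑ x, h (x + c) = ∑ x, h x :=
  Fintype.sum_equiv (Equiv.addRight c) _ _ (fun _ => rfl)

lemma LB_zero_mem (m n k : ℕ) [NeZero m] (hk0 : 0 < k) (B : Finset (Fin n)) :
    (0 : Fin n → ZMod m) ∈ LB m n k B := by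
  classical
  refine Finset.mem_filter.mpr ⟨Finset.mem_univ _, fun i _ => rfl, fun i => by simp, ?_⟩
  simpa using hk0

lemma delta_contract (m n k : ℕ) [NeZero m] {X : Type*} [NormedAddCommGroup X]
    [NormedSpace ℝ X] (hk0 : 0 < k) (B : Finset (Fin n)) (g : (Fin n → ZMod m) → X)
    (p : ℝ) (hp : 1 ≤ p) :
    ∑ x : Fin n → ZMod m, ‖Delta m n k B g x‖ ^ p
      ≤ ∑ x : Fin n → ZMod m, ‖g x‖ ^ p := by
  classical
  set L := LB m n k B with hL
  have hNpos : (0:ℝ) < L.card := by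
    exact_mod_cast Finset.card_pos.mpr ⟨0, LB_zero_mem m n k hk0 B⟩
  have hcoef : ((L.card:ℝ)⁻¹) ^ p * (L.card:ℝ) ^ (p-1) = (L.card:ℝ)⁻¹ := by
    rw [Real.inv_rpow hNpos.le, ← Real.rpow_neg hNpos.le, ← Real.rpow_add hNpos,
      (by ring : -p + (p-1) = -1), Real.rpow_neg_one]
  have key : ∀ x : Fin n → ZMod m,
      ‖Delta m n k B g x‖ ^ p ≤ (L.card:ℝ)⁻¹ * ∑ y ∈ L, ‖g (x + y)‖ ^ p := by
    intro x
    have h0 : ‖Delta m n k B g x‖ = (L.card:ℝ)⁻¹ * ‖∑ y ∈ L, g (x + y)‖ := by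
      rw [Delta, norm_smul, Real.norm_eq_abs, abs_of_nonneg (by positivity)]
    rw [h0, Real.mul_rpow (by positivity) (norm_nonneg _)]
    calc ((L.card:ℝ)⁻¹) ^ p * ‖∑ y ∈ L, g (x + y)‖ ^ p
        ≤ ((L.card:ℝ)⁻¹) ^ p * ((L.card:ℝ) ^ (p-1) * ∑ y ∈ L, ‖g (x+y)‖ ^ p) :=
          mul_le_mul_of_nonneg_left (lemA p hp L (fun y => g (x + y))) (by positivity)
      _ = (L.card:ℝ)⁻¹ * ∑ y ∈ L, ‖g (x+y)‖ ^ p := by rw [← mul_assoc, hcoef]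
  calc ∑ x : Fin n → ZMod m, ‖Delta m n k B g x‖ ^ p
      ≤ ∑ x : Fin n → ZMod m, (L.card:ℝ)⁻¹ * ∑ y ∈ L, ‖g (x+y)‖ ^ p :=
        Finset.sum_le_sum (fun x _ => key x)
    _ = (L.card:ℝ)⁻¹ * ∑ y ∈ L, ∑ x : Fin n → ZMod m, ‖g (x+y)‖ ^ p := by
        rw [← Finset.mul_sum, Finset.sum_comm]
    _ = (L.card:ℝ)⁻¹ * ∑ y ∈ L, ∑ x : Fin n → ZMod m, ‖g x‖ ^ p := by
        congr 1
        exact Finset.sum_congr rfl (fun y _ => my_sum_translate (fun x => ‖g x‖ ^ p) y)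
    _ = ∑ x : Fin n → ZMod m, ‖g x‖ ^ p := by
        rw [Finset.sum_const, nsmul_eq_mul, ← mul_assoc, inv_mul_cancel₀ hNpos.ne', one_mul]

lemma delta_diff (m n k : ℕ) [NeZero m] {X : Type*} [NormedAddCommGroup X]
    [NormedSpace ℝ X] (B : Finset (Fin n)) (f : (Fin n → ZMod m) → X)
    (e z : Fin n → ZMod m) :
    Delta m n k B f (z + e) - Delta m n k B f (z - e)
      = Delta m n k B (fun w => f (w + e) - f (w - e)) z := by
  unfold Delta
  rw [← smul_sub, ← Finset.sum_sub_distrib]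
  congr 1
  refine Finset.sum_congr rfl fun y _ => ?_
  rw [show z + e + y = z + y + e from by abel, show z - e + y = z + y - e from by abel]

lemma sumT_le (m n k : ℕ) [NeZero m] {X : Type*} [NormedAddCommGroup X]
    [NormedSpace ℝ X] (hk0 : 0 < k) (B : Finset (Fin n)) (f : (Fin n → ZMod m) → X)
    (c e : Fin n → ZMod m) (p : ℝ) (hp : 1 ≤ p) :
    ∑ x : Fin n → ZMod m, ‖Delta m n k B f (x + c + e) - Delta m n k B f (x + c - e)‖ ^ p
      ≤ ∑ x : Fin n → ZMod m, ‖f (x + e) - f (x - e)‖ ^ p := by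
  have h1 : ∀ x : Fin n → ZMod m,
      Delta m n k B f (x + c + e) - Delta m n k B f (x + c - e)
        = Delta m n k B (fun w => f (w + e) - f (w - e)) (x + c) :=
    fun x => delta_diff m n k B f e (x + c)
  calc ∑ x : Fin n → ZMod m, ‖Delta m n k B f (x + c + e) - Delta m n k B f (x + c - e)‖ ^ p
      = ∑ x : Fin n → ZMod m, ‖Delta m n k B (fun w => f (w + e) - f (w - e)) (x + c)‖ ^ p := by
        exact Finset.sum_congr rfl fun x _ => by rw [h1 x]
    _ = ∑ x : Fin n → ZMod m, ‖Delta m n k B (fun w => f (w + e) - f (w - e)) x‖ ^ p :=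
        my_sum_translate (fun x => ‖Delta m n k B (fun w => f (w + e) - f (w - e)) x‖ ^ p) c
    _ ≤ _ := delta_contract m n k hk0 B _ p hp

lemma card_arith (a b i l s : ℕ) (h2 : (a:ℤ) - (b:ℤ) = (i:ℤ) - 2 * l)
    (hsplit : a + b = s) (hS : s = i) : b = l := by omega

open scoped Classical in
lemma cardD_le (n i l : ℕ) (S : Finset (Fin n)) (hS : S.card = i) (ε : Fin n → Bool) :
    (Finset.univ.filter (fun δ : Fin n → Bool =>
        (∀ j, j ∉ S → δ j = true) ∧
        (∑ j ∈ S, (if δ j then (1 : ℤ) else -1) * (if ε j then 1 else -1)) = (i : ℤ) - 2 * l)).card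
      ≤ i.choose l := by
  have hterm : ∀ (δ : Fin n → Bool) (j : Fin n),
      (if δ j then (1:ℤ) else -1) * (if ε j then 1 else -1)
        = if δ j = ε j then 1 else -1 := by
    intro δ j; cases δ j <;> cases ε j <;> norm_num
  refine le_trans (Finset.card_le_card_of_injOn
      (fun δ => S.filter (fun j => ¬ δ j = ε j)) ?_ ?_)
      (le_of_eq (by rw [Finset.card_powersetCard, hS]))
  · intro δ hδ
    obtain ⟨-, h1, h2⟩ := Finset.mem_filter.mp hδ
    rw [Finset.sum_congr rfl (fun j _ => hterm δ j)] at h2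
    refine Finset.mem_powersetCard.mpr ⟨Finset.filter_subset _ _, ?_⟩
    have hsplit : (S.filter (fun j => δ j = ε j)).card
        + (S.filter (fun j => ¬ δ j = ε j)).card = S.card :=
      Finset.card_filter_add_card_filter_not _
    have hsum : ∑ j ∈ S, (if δ j = ε j then (1:ℤ) else -1)
        = ((S.filter (fun j => δ j = ε j)).card : ℤ)
          - ((S.filter (fun j => ¬ δ j = ε j)).card : ℤ) := by
      rw [Finset.sum_ite, Finset.sum_const, Finset.sum_const]
      simp [sub_eq_add_neg]
    rw [hsum] at h2
    exact card_arith _ _ _ _ _ h2 hsplit hS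
  · intro δ1 h1 δ2 h2 heq
    simp only [Finset.mem_coe, Finset.mem_filter] at h1 h2
    funext j
    by_cases hjS : j ∈ S
    · have hmem := Finset.ext_iff.mp heq j
      simp only [Finset.mem_filter, hjS, true_and] at hmem
      revert hmem
      cases δ1 j <;> cases δ2 j <;> cases ε j <;> simp
    · rw [h1.2.1 j hjS, h2.2.1 j hjS]

end Aux

/-- For every Banach space `X`, `p ≥ 1`, even `m ≥ 2`, odd `0 < k < m/2`, `0 ≤ l ≤ i ≤ n`,
`f : ℤ_m^n → X` and every fixed `ε ∈ {-1,1}^n`,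
`∫ ‖R_{i,l}f(x,ε)‖^p dμ(x) ≤ 2^p binom(n,i)^(p-1) binom(i,l)^p
  ∑_{S ⊆ [n], |S|=i} ∫ ‖f(x + ε_{[n]∖S}) - f(x - ε_{[n]∖S})‖^p dμ(x)`. -/
theorem R_pointwise_bound (p : ℝ) (hp : 1 ≤ p)
    (X : Type*) [NormedAddCommGroup X] [NormedSpace ℝ X] [CompleteSpace X]
    (n m k : ℕ) [NeZero m] (hm2 : 2 ≤ m) (hme : m % 2 = 0)
    (hk : Odd k) (hk0 : 0 < k) (hkm : 2 * k < m)
    (i l : ℕ) (hl : l ≤ i) (hi : i ≤ n)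
    (f : (Fin n → ZMod m) → X) (ε : Fin n → Bool) :
    (∑ x : Fin n → ZMod m, ‖Rop m n k i l f x ε‖ ^ p) / (m : ℝ) ^ n ≤
      (2 : ℝ) ^ p * (n.choose i : ℝ) ^ (p - 1) * (i.choose l : ℝ) ^ p *
        ∑ S ∈ Finset.powersetCard i (Finset.univ : Finset (Fin n)),
          (∑ x : Fin n → ZMod m,
              ‖f (x + signVecOn m n Sᶜ ε) - f (x - signVecOn m n Sᶜ ε)‖ ^ p) / (m : ℝ) ^ n := by
  classical
  set P := Finset.powersetCard i (Finset.univ : Finset (Fin n)) with hP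
  set D : Finset (Fin n) → Finset (Fin n → Bool) := fun S => Finset.univ.filter
      (fun δ : Fin n → Bool =>
        (∀ j, j ∉ S → δ j = true) ∧
        (∑ j ∈ S, (if δ j then (1 : ℤ) else -1) * (if ε j then 1 else -1))
          = (i : ℤ) - 2 * l) with hD
  set T : Finset (Fin n) → (Fin n → Bool) → (Fin n → ZMod m) → X := fun S δ x =>
      Delta m n k Sᶜ f (x + k • signVecOn m n S δ + signVecOn m n Sᶜ ε) -
      Delta m n k Sᶜ f (x + k • signVecOn m n S δ - signVecOn m n Sᶜ ε) with hT
  set F : Finset (Fin n) → ℝ := fun S => ∑ x : Fin n → ZMod m,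
      ‖f (x + signVecOn m n Sᶜ ε) - f (x - signVecOn m n Sᶜ ε)‖ ^ p with hF
  have hF0 : ∀ S, 0 ≤ F S :=
    fun S => Finset.sum_nonneg fun x _ => Real.rpow_nonneg (norm_nonneg _) p
  have hRop : ∀ x : Fin n → ZMod m, Rop m n k i l f x ε = ∑ S ∈ P, ∑ δ ∈ D S, T S δ x :=
    fun x => rfl
  have hcard : ((P.card : ℕ) : ℝ) = n.choose i := by
    rw [hP, Finset.card_powersetCard, Finset.card_univ, Fintype.card_fin]
  -- Step A
  have stepA : ∑ x : Fin n → ZMod m, ‖Rop m n k i l f x ε‖ ^ p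
      ≤ (n.choose i : ℝ) ^ (p - 1)
        * ∑ S ∈ P, ∑ x : Fin n → ZMod m, ‖∑ δ ∈ D S, T S δ x‖ ^ p := by
    calc ∑ x : Fin n → ZMod m, ‖Rop m n k i l f x ε‖ ^ p
        ≤ ∑ x : Fin n → ZMod m,
            (n.choose i : ℝ) ^ (p - 1) * ∑ S ∈ P, ‖∑ δ ∈ D S, T S δ x‖ ^ p := by
          refine Finset.sum_le_sum fun x _ => ?_
          rw [hRop x]
          have := lemA p hp P (fun S => ∑ δ ∈ D S, T S δ x)
          rwa [hcard] at this
      _ = _ := by rw [← Finset.mul_sum, Finset.sum_comm]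
  -- Step B
  have stepB : ∀ S ∈ P, ∑ x : Fin n → ZMod m, ‖∑ δ ∈ D S, T S δ x‖ ^ p
      ≤ (i.choose l : ℝ) ^ p * F S := by
    intro S hS
    have hScard : S.card = i := (Finset.mem_powersetCard.mp hS).2
    have hDcard : (D S).card ≤ i.choose l := cardD_le n i l S hScard ε
    have hchoose : (0:ℝ) < (i.choose l : ℝ) := by exact_mod_cast Nat.choose_pos hl
    have hTx : ∀ δ ∈ D S, ∑ x : Fin n → ZMod m, ‖T S δ x‖ ^ p ≤ F S := fun δ _ =>
      sumT_le m n k hk0 Sᶜ f (k • signVecOn m n S δ) (signVecOn m n Sᶜ ε) p hp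
    calc ∑ x : Fin n → ZMod m, ‖∑ δ ∈ D S, T S δ x‖ ^ p
        ≤ ∑ x : Fin n → ZMod m,
            ((D S).card : ℝ) ^ (p - 1) * ∑ δ ∈ D S, ‖T S δ x‖ ^ p :=
          Finset.sum_le_sum fun x _ => lemA p hp (D S) (fun δ => T S δ x)
      _ = ((D S).card : ℝ) ^ (p - 1) * ∑ δ ∈ D S, ∑ x : Fin n → ZMod m, ‖T S δ x‖ ^ p := by
          rw [← Finset.mul_sum, Finset.sum_comm]
      _ ≤ (i.choose l : ℝ) ^ (p - 1) * ((i.choose l : ℝ) * F S) := by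
          refine mul_le_mul ?_ ?_ ?_ ?_
          · exact Real.rpow_le_rpow (by positivity) (by exact_mod_cast hDcard) (by linarith)
          · calc ∑ δ ∈ D S, ∑ x : Fin n → ZMod m, ‖T S δ x‖ ^ p
                ≤ ∑ _δ ∈ D S, F S := Finset.sum_le_sum hTx
              _ = ((D S).card : ℝ) * F S := by rw [Finset.sum_const, nsmul_eq_mul]
              _ ≤ (i.choose l : ℝ) * F S :=
                  mul_le_mul_of_nonneg_right (by exact_mod_cast hDcard) (hF0 S)
          · exact Finset.sum_nonneg fun δ _ => Finset.sum_nonneg fun x _ =>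
              Real.rpow_nonneg (norm_nonneg _) p
          · positivity
      _ = (i.choose l : ℝ) ^ p * F S := by
          rw [← mul_assoc, ← Real.rpow_add_one hchoose.ne' (p - 1), sub_add_cancel]
  -- combine
  have key : ∑ x : Fin n → ZMod m, ‖Rop m n k i l f x ε‖ ^ p
      ≤ (n.choose i : ℝ) ^ (p - 1) * ((i.choose l : ℝ) ^ p * ∑ S ∈ P, F S) := by
    refine stepA.trans (mul_le_mul_of_nonneg_left ?_ (Real.rpow_nonneg (by positivity) _))
    rw [Finset.mul_sum]
    exact Finset.sum_le_sum stepB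
  have hN : (0:ℝ) < (m : ℝ) ^ n := by positivity
  have h2p : (1:ℝ) ≤ (2:ℝ) ^ p := by
    have := Real.rpow_le_rpow_of_exponent_le (by norm_num : (1:ℝ) ≤ 2) (by linarith : (0:ℝ) ≤ p)
    rwa [Real.rpow_zero] at this
  have hsum0 : 0 ≤ ∑ S ∈ P, F S := Finset.sum_nonneg fun S _ => hF0 S
  have hnum : (n.choose i : ℝ) ^ (p - 1) * ((i.choose l : ℝ) ^ p * ∑ S ∈ P, F S)
      ≤ (2:ℝ) ^ p * (n.choose i : ℝ) ^ (p - 1) * (i.choose l : ℝ) ^ p * ∑ S ∈ P, F S := by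
    have hnn : (0:ℝ) ≤ (n.choose i : ℝ) ^ (p - 1) * ((i.choose l : ℝ) ^ p * ∑ S ∈ P, F S) :=
      mul_nonneg (Real.rpow_nonneg (by positivity) _)
        (mul_nonneg (Real.rpow_nonneg (by positivity) _) hsum0)
    calc (n.choose i : ℝ) ^ (p - 1) * ((i.choose l : ℝ) ^ p * ∑ S ∈ P, F S)
        = 1 * ((n.choose i : ℝ) ^ (p - 1) * ((i.choose l : ℝ) ^ p * ∑ S ∈ P, F S)) :=
          (one_mul _).symm
      _ ≤ (2:ℝ) ^ p * ((n.choose i : ℝ) ^ (p - 1) * ((i.choose l : ℝ) ^ p * ∑ S ∈ P, F S)) :=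
          mul_le_mul_of_nonneg_right h2p hnn
      _ = _ := by ring
  calc (∑ x : Fin n → ZMod m, ‖Rop m n k i l f x ε‖ ^ p) / (m : ℝ) ^ n
      ≤ ((2:ℝ) ^ p * (n.choose i : ℝ) ^ (p - 1) * (i.choose l : ℝ) ^ p * ∑ S ∈ P, F S)
          / (m : ℝ) ^ n := by
        exact div_le_div_of_nonneg_right (key.trans hnum) hN.le
    _ = (2:ℝ) ^ p * (n.choose i : ℝ) ^ (p - 1) * (i.choose l : ℝ) ^ p
          * ∑ S ∈ P, F S / (m : ℝ) ^ n := by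
        rw [mul_div_assoc, Finset.sum_div]
    _ = _ := by rw [hF]
end
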